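/- If g is a reversible uniformly non-prime 2-structure then each cluster M in C¹(g) is a 1-cluster in at most two different cotrees: if the tree representation labels the strong module M by the pair (i, j), then M is a 1-cluster of T_i and of T_j, and for every label k ∉ {i, j}, M is not a 1-cluster of T_k. -/

import Mathlib

/-- A 2-structure is modeled by a labeling `φ : V → V → Υ`; only values on
distinct pairs are relevant. A *module* of the 2-structure. -/
def IsModule {V Υ : Type*} (φ : V → V → Υ) (M : Set V) : Prop :=
  ∀ x ∈ M, ∀ y ∈ M, ∀ z ∉ M, φ x z = φ y z ∧ φ z x = φ z y

/-- A graph-module of a digraph given by its arc relation `E`. -/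
def IsGraphModule {V : Type*} (E : V → V → Prop) (M : Set V) : Prop :=
  ∀ x ∈ M, ∀ y ∈ M, ∀ z ∉ M, (E x z ↔ E y z) ∧ (E z x ↔ E z y)

/-- Two sets overlap: they intersect and neither contains the other. -/
def Overlap {V : Type*} (A B : Set V) : Prop :=
  (A ∩ B).Nonempty ∧ ¬ A ⊆ B ∧ ¬ B ⊆ A

/-- A (nonempty) module of a 2-structure. -/
def IsModuleNe {V Υ : Type*} (φ : V → V → Υ) (M : Set V) : Prop :=
  M.Nonempty ∧ IsModule φ M

/-- A strong module: a module overlapping no other module. -/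
def IsStrongModule {V Υ : Type*} (φ : V → V → Υ) (M : Set V) : Prop :=
  IsModuleNe φ M ∧ ∀ N : Set V, IsModuleNe φ N → ¬ Overlap M N

/-- The labeling of the reversible refinement `rev(g)`. -/
def revMap {V Υ : Type*} (φ : V → V → Υ) : V → V → Υ × Υ :=
  fun x y => (φ x y, φ y x)

/-- A 2-structure is reversible if equally labeled arcs have equally
labeled reverse arcs. -/
def Reversible {V Υ : Type*} (φ : V → V → Υ) : Prop :=
  ∀ x y a b : V, x ≠ y → a ≠ b → φ x y = φ a b → φ y x = φ b a

/-- The unordered pair of labels on the two arcs between `u` and `v`. -/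
def Dset {V Υ : Type*} (φ : V → V → Υ) (u v : V) : Set Υ :=
  {φ u v, φ v u}

/-- The triangle condition (U2). -/
def CondU2 {V Υ : Type*} (φ : V → V → Υ) : Prop :=
  ∀ x y z : V, x ≠ y → x ≠ z → y ≠ z →
    ({Dset φ x y, Dset φ x z, Dset φ y z} : Set (Set Υ)).ncard ≤ 2

/-- The monochromatic digraph `G_i(g)` with arcs labeled `i`. -/
def Ggraph {V Υ : Type*} (φ : V → V → Υ) (i : Υ) : V → V → Prop :=
  fun x y => x ≠ y ∧ φ x y = i

/-- A relation on `Fin n` given by an explicit arc list. -/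
def relOf {n : ℕ} (L : List (Fin n × Fin n)) : Fin n → Fin n → Prop :=
  fun k l => (k, l) ∈ L

/-- Forbidden digraph `D₃`: arcs (0,1),(1,2) only. -/
def FD3 : Fin 3 → Fin 3 → Prop := relOf [(0,1),(1,2)]
/-- Forbidden digraph `A`: an arc into an endpoint of a symmetric edge. -/
def FA : Fin 3 → Fin 3 → Prop := relOf [(0,1),(1,2),(2,1)]
/-- Forbidden digraph `B`: an arc out of an endpoint of a symmetric edge. -/
def FB : Fin 3 → Fin 3 → Prop := relOf [(0,1),(1,0),(1,2)]
/-- Forbidden digraph `D̄₃`: the complement of `D₃`. -/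
def FD3c : Fin 3 → Fin 3 → Prop := relOf [(1,0),(2,1),(0,2),(2,0)]
/-- Forbidden digraph `C₃`: a directed triangle. -/
def FC3 : Fin 3 → Fin 3 → Prop := relOf [(0,1),(1,2),(2,0)]
/-- Forbidden digraph `N`: arcs (1,0),(1,2),(3,2) only. -/
def FN : Fin 4 → Fin 4 → Prop := relOf [(1,0),(1,2),(3,2)]
/-- Forbidden digraph `N̄`: the complement of `N`. -/
def FNc : Fin 4 → Fin 4 → Prop :=
  relOf [(0,1),(2,1),(2,3),(0,2),(2,0),(0,3),(3,0),(1,3),(3,1)]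
/-- Forbidden digraph `P₄`: a symmetric path on four vertices. -/
def FP4 : Fin 4 → Fin 4 → Prop := relOf [(0,1),(1,0),(1,2),(2,1),(2,3),(3,2)]

/-- `E` contains the pattern `K` as an induced subgraph. -/
def HasInducedCopy {V : Type*} (E : V → V → Prop) {n : ℕ}
    (K : Fin n → Fin n → Prop) : Prop :=
  ∃ ι : Fin n → V, Function.Injective ι ∧
    ∀ k l : Fin n, k ≠ l → (E (ι k) (ι l) ↔ K k l)

/-- A di-cograph: a digraph with none of the eight forbidden induced
subgraphs `D₃, A, B, D̄₃, C₃, N̄, N, P₄`. -/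
def IsDiCograph {V : Type*} (E : V → V → Prop) : Prop :=
  ¬ HasInducedCopy E FD3 ∧ ¬ HasInducedCopy E FA ∧ ¬ HasInducedCopy E FB ∧
  ¬ HasInducedCopy E FD3c ∧ ¬ HasInducedCopy E FC3 ∧
  ¬ HasInducedCopy E FNc ∧ ¬ HasInducedCopy E FN ∧ ¬ HasInducedCopy E FP4

/-- Condition (U1): every monochromatic digraph is a di-cograph. -/
def CondU1 {V Υ : Type*} (φ : V → V → Υ) : Prop :=
  ∀ i : Υ, IsDiCograph (Ggraph φ i)

/-- `δ` is a symbolic ultrametric: (U1) and (U2). -/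
def SymbolicUltrametric {V Υ : Type*} (φ : V → V → Υ) : Prop :=
  CondU1 φ ∧ CondU2 φ

/-- A module of the induced substructure `g[X]`. -/
def IsModuleOn {V Υ : Type*} (φ : V → V → Υ) (X M : Set V) : Prop :=
  M ⊆ X ∧ ∀ x ∈ M, ∀ y ∈ M, ∀ z ∈ X \ M, φ x z = φ y z ∧ φ z x = φ z y

/-- The substructure `g[X]` is prime: all its modules are trivial. -/
def IsPrimeOn {V Υ : Type*} (φ : V → V → Υ) (X : Set V) : Prop :=
  ∀ M : Set V, IsModuleOn φ X M → M = ∅ ∨ (∃ v, M = {v}) ∨ M = X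

/-- Uniformly non-prime: no induced substructure on ≥ 3 vertices is prime. -/
def Unp {V Υ : Type*} (φ : V → V → Υ) : Prop :=
  ∀ X : Set V, 3 ≤ X.ncard → ¬ IsPrimeOn φ X

/-- A (nonempty) graph-module of a digraph. -/
def IsGraphModuleNe {V : Type*} (E : V → V → Prop) (M : Set V) : Prop :=
  M.Nonempty ∧ IsGraphModule E M

/-- A strong graph-module of a digraph. -/
def IsStrongGraphModule {V : Type*} (E : V → V → Prop) (M : Set V) : Prop :=
  IsGraphModuleNe E M ∧ ∀ N : Set V, IsGraphModuleNe E N → ¬ Overlap M N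

/-- The subgraph induced on `M` is (weakly) connected. -/
def ConnectedOn {V : Type*} (E : V → V → Prop) (M : Set V) : Prop :=
  ∀ x ∈ M, ∀ y ∈ M,
    Relation.ReflTransGen (fun a b => a ∈ M ∧ b ∈ M ∧ (E a b ∨ E b a)) x y

/-- `M` is a 1-cluster of (the cotree of) the di-cograph `E`: a strong module
with at least two vertices whose cotree vertex is series or order, i.e. whose
induced subgraph is weakly connected. -/
def IsOneCluster {V : Type*} (E : V → V → Prop) (M : Set V) : Prop :=
  IsStrongGraphModule E M ∧ 2 ≤ M.ncard ∧ ConnectedOn E M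

/-- `C¹(g)`: all 1-clusters of the monochromatic di-cographs together with
all singletons. -/
def OneClusters {V Υ : Type*} (φ : V → V → Υ) : Set (Set V) :=
  {M | (∃ i : Υ, IsOneCluster (Ggraph φ i) M) ∨ ∃ v : V, M = {v}}

/-- `M` is the least common ancestor module of `x` and `y`: the minimal strong
module of `g` containing both. -/
def IsLcaModule {V Υ : Type*} (φ : V → V → Υ) (x y : V) (M : Set V) : Prop :=
  IsStrongModule φ M ∧ x ∈ M ∧ y ∈ M ∧
    ∀ N : Set V, IsStrongModule φ N → x ∈ N → y ∈ N → M ⊆ N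


/-!
Two points of `M` lie in the same child of `M` when some strong module containing both misses
`M`. Since strong modules are nested and `V` is finite, this is an equivalence relation on `M`
with at least two classes, and the pairs taken from different classes are exactly those whose
least common strong ancestor is `M`, so they carry the labels `i` and `j`. The complement of such
an equivalence relation is connected, hence `M` is connected in `G_i` and in `G_j`, whereas an arc
of any other colour `k` stays inside a class, so `G_k` does not connect `M`. If a module `N` of
`G_i` overlapped `M`, a pair from different classes with one point in `N` and one outside gives an
`i`-arc which, with reversibility and the non-primality of every triangle, makes `N` a module of
the 2-structure, contradicting the strongness of `M`.
-/

section TwoStructure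

variable {V Υ : Type*} {φ : V → V → Υ}

section Modules

theorem IsStrongModule.subset_or_subset {A B : Set V} (hA : IsStrongModule φ A)
    (hB : IsStrongModule φ B) (h : (A ∩ B).Nonempty) : A ⊆ B ∨ B ⊆ A := by
  by_contra! h'
  exact hA.2 B hB.1 ⟨h, h'.1, h'.2⟩

theorem isStrongModule_singleton (x : V) : IsStrongModule φ {x} := by
  refine ⟨⟨Set.singleton_nonempty x, fun y hy y' hy' z _ => ?_⟩, fun N _ hov => ?_⟩
  · rw [Set.mem_singleton_iff] at hy hy'
    subst hy hy'
    exact ⟨rfl, rfl⟩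
  · obtain ⟨⟨y, hyx, hyN⟩, hxN, -⟩ := hov
    rw [Set.mem_singleton_iff] at hyx
    exact hxN (Set.singleton_subset_iff.2 (hyx ▸ hyN))

theorem IsModule.flip {M : Set V} (h : IsModule φ M) : IsModule (flip φ) M :=
  fun x hx y hy z hz => (h x hx y hy z hz).symm

theorem IsModuleOn.flip {X M : Set V} (h : IsModuleOn φ X M) : IsModuleOn (flip φ) X M :=
  ⟨h.1, fun x hx y hy z hz => (h.2 x hx y hy z hz).symm⟩

theorem Reversible.flip (hrev : Reversible φ) : Reversible (flip φ) :=
  fun x y a b hxy hab h => hrev y x b a hxy.symm hab.symm h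

theorem Unp.flip (hunp : Unp φ) : Unp (flip φ) :=
  fun X hX hprime => hunp X hX fun W hW => hprime W hW.flip

theorem isGraphModule_ggraph_iff {i : Υ} {N : Set V} :
    IsGraphModule (Ggraph φ i) N ↔
      ∀ x ∈ N, ∀ y ∈ N, ∀ z ∉ N, (φ x z = i ↔ φ y z = i) ∧ (φ z x = i ↔ φ z y = i) := by
  refine forall₂_congr fun x hx => forall₂_congr fun y hy => forall₂_congr fun z hz => ?_
  have hxz : x ≠ z := fun h => hz (h ▸ hx)
  have hyz : y ≠ z := fun h => hz (h ▸ hy)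
  simp only [Ggraph, ne_eq, hxz, hyz, Ne.symm hxz, Ne.symm hyz, not_false_eq_true, true_and]

theorem IsModule.isGraphModule_ggraph {M : Set V} (h : IsModule φ M) (i : Υ) :
    IsGraphModule (Ggraph φ i) M :=
  isGraphModule_ggraph_iff.2 fun x hx y hy z hz => by
    rw [(h x hx y hy z hz).1, (h x hx y hy z hz).2]
    exact ⟨Iff.rfl, Iff.rfl⟩

theorem IsGraphModule.ggraph_flip {i : Υ} {N : Set V} (h : IsGraphModule (Ggraph φ i) N) :
    IsGraphModule (Ggraph (flip φ) i) N :=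
  isGraphModule_ggraph_iff.2 fun x hx y hy z hz =>
    (isGraphModule_ggraph_iff.1 h x hx y hy z hz).symm

end Modules

section Triangles

theorem Unp.exists_twins (hunp : Unp φ) {a b c : V} (hab : a ≠ b) (hac : a ≠ c) (hbc : b ≠ c) :
    (φ a c = φ b c ∧ φ c a = φ c b) ∨ (φ a b = φ c b ∧ φ b a = φ b c) ∨
      (φ b a = φ c a ∧ φ a b = φ a c) := by
  have h3 : 3 ≤ ({a, b, c} : Set V).ncard :=
    (Set.ncard_eq_three.2 ⟨a, b, c, hab, hac, hbc, rfl⟩).ge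
  obtain ⟨W, hW, hWne, hWsingle, hWX⟩ : ∃ W, IsModuleOn φ {a, b, c} W ∧ W ≠ ∅ ∧
      (∀ v, W ≠ {v}) ∧ W ≠ {a, b, c} := by
    simpa [IsPrimeOn] using hunp _ h3
  obtain ⟨p, hp, q, hq, hpq⟩ : W.Nontrivial :=
    (Set.nonempty_iff_ne_empty.2 hWne).exists_eq_singleton_or_nontrivial.resolve_left
      fun ⟨v, hv⟩ => hWsingle v hv
  obtain ⟨r, hr, hrW⟩ := Set.exists_of_ssubset (hW.1.ssubset_of_ne hWX)
  have htw := hW.2 p hp q hq r ⟨hr, hrW⟩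
  have hrp : r ≠ p := fun h => hrW (h ▸ hp)
  have hrq : r ≠ q := fun h => hrW (h ▸ hq)
  have hpX := hW.1 hp
  have hqX := hW.1 hq
  simp only [Set.mem_insert_iff, Set.mem_singleton_iff] at hpX hqX hr
  rcases hpX with rfl | rfl | rfl <;> rcases hqX with rfl | rfl | rfl <;>
    rcases hr with rfl | rfl | rfl <;> simp_all [eq_comm]

theorem Unp.twins_of_ggraph_twins (hrev : Reversible φ) (hunp : Unp φ) {i : Υ} {a c z : V}
    (hac : a ≠ c) (haz : a ≠ z) (hcz : c ≠ z) (hlab : φ a c = i ∨ φ c a = i)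
    (htw : (φ c z = i ↔ φ a z = i) ∧ (φ z c = i ↔ φ z a = i)) :
    φ c z = φ a z ∧ φ z c = φ z a := by
  suffices φ c z = φ a z ∨ φ z c = φ z a by
    rcases this with h | h
    · exact ⟨h, hrev c z a z hcz haz h⟩
    · exact ⟨hrev z c z a hcz.symm haz.symm h, h⟩
  rcases hunp.exists_twins hac haz hcz with h | h | h
  · exact Or.inl h.1.symm
  · rcases hlab with hl | hl
    · have hzc : φ z c = i := h.1.symm.trans hl
      exact Or.inr (hzc.trans (htw.2.1 hzc).symm)
    · have hcz' : φ c z = i := h.2.symm.trans hl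
      exact Or.inl (hcz'.trans (htw.1.1 hcz').symm)
  · rcases hlab with hl | hl
    · have haz' : φ a z = i := h.2.symm.trans hl
      exact Or.inl ((htw.1.2 haz').trans haz'.symm)
    · have hza : φ z a = i := h.1.symm.trans hl
      exact Or.inr ((htw.2.2 hza).trans hza.symm)

end Triangles

section Children

/-- For `x y ∈ M`: `x` and `y` lie in the same child of `M` in the inclusion tree of the strong
modules. -/
def SameChild (φ : V → V → Υ) (M : Set V) (x y : V) : Prop :=
  ∃ C, IsStrongModule φ C ∧ x ∈ C ∧ y ∈ C ∧ ¬ M ⊆ C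

variable {M : Set V}

theorem SameChild.symm {x y : V} (h : SameChild φ M x y) : SameChild φ M y x :=
  let ⟨C, hC, hx, hy, hMC⟩ := h
  ⟨C, hC, hy, hx, hMC⟩

theorem SameChild.trans {x y z : V} (hxy : SameChild φ M x y) (hyz : SameChild φ M y z) :
    SameChild φ M x z := by
  obtain ⟨C, hC, hxC, hyC, hMC⟩ := hxy
  obtain ⟨D, hD, hyD, hzD, hMD⟩ := hyz
  rcases hC.subset_or_subset hD ⟨y, hyC, hyD⟩ with hCD | hDC
  · exact ⟨D, hD, hCD hxC, hzD, hMD⟩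
  · exact ⟨C, hC, hxC, hDC hzD, hMC⟩

theorem sameChild_equivalence (h2 : 2 ≤ M.ncard) : Equivalence (SameChild φ M) where
  refl x := ⟨{x}, isStrongModule_singleton x, rfl, rfl, fun hM => by
    have := Set.ncard_le_ncard hM (Set.finite_singleton x)
    rw [Set.ncard_singleton] at this
    omega⟩
  symm := SameChild.symm
  trans := SameChild.trans

theorem isLcaModule_iff_not_sameChild (hM : IsStrongModule φ M) {x y : V} (hx : x ∈ M)
    (hy : y ∈ M) : IsLcaModule φ x y M ↔ ¬ SameChild φ M x y := by
  simp only [IsLcaModule, SameChild, not_exists, not_and, not_not]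
  exact ⟨fun h => h.2.2.2, fun h => ⟨hM, hx, hy, h⟩⟩

/-- A maximal strong module through `a` that misses `M` absorbs all the others. -/
theorem not_forall_sameChild [Finite V] {a : V} (ha : a ∈ M) :
    ¬ ∀ z ∈ M, SameChild φ M a z := by
  intro h
  obtain ⟨C, hC, haC, -, hMC⟩ := h a ha
  obtain ⟨C, ⟨hC, haC, hMC⟩, hmax⟩ := Set.Finite.exists_maximalFor id
    {C | IsStrongModule φ C ∧ a ∈ C ∧ ¬ M ⊆ C} (Set.toFinite _) ⟨C, hC, haC, hMC⟩
  refine hMC fun z hz => ?_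
  obtain ⟨D, hD, haD, hzD, hMD⟩ := h z hz
  rcases hD.subset_or_subset hC ⟨a, haD, haC⟩ with hDC | hCD
  · exact hDC hzD
  · exact hmax ⟨hD, haD, hMD⟩ hCD hzD

theorem exists_not_sameChild_of_split [Finite V] (p : V → Prop) {a b : V} (ha : a ∈ M)
    (hpa : p a) (hb : b ∈ M) (hpb : ¬ p b) :
    ∃ x ∈ M, ∃ y ∈ M, p x ∧ ¬ p y ∧ ¬ SameChild φ M x y := by
  by_contra! h
  refine not_forall_sameChild (φ := φ) ha fun z hz => ?_
  by_cases hpz : p z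
  · exact (h a ha b hb hpa hpb).trans (h z hz b hb hpz hpb).symm
  · exact h a ha z hz hpa hpz

theorem exists_not_sameChild [Finite V] (h2 : 2 ≤ M.ncard) :
    ∃ x ∈ M, ∃ y ∈ M, ¬ SameChild φ M x y := by
  obtain ⟨u, hu, v, hv, huv⟩ := (Set.one_lt_ncard M.toFinite).1 h2
  obtain ⟨x, hx, y, hy, -, -, h⟩ := exists_not_sameChild_of_split (φ := φ) (· = u) hu rfl hv
    huv.symm
  exact ⟨x, hx, y, hy, h⟩

end Children

section Connectivity

variable {E R : V → V → Prop} {M : Set V}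

theorem connectedOn_of_not_rel (hR : Equivalence R)
    (hE : ∀ x ∈ M, ∀ y ∈ M, ¬ R x y → E x y ∨ E y x) {u v : V} (hu : u ∈ M) (hv : v ∈ M)
    (huv : ¬ R u v) : ConnectedOn E M := by
  let r := fun a b => a ∈ M ∧ b ∈ M ∧ (E a b ∨ E b a)
  have edge : ∀ x ∈ M, ∀ y ∈ M, ¬ R x y → Relation.ReflTransGen r x y :=
    fun x hx y hy h => .single ⟨hx, hy, hE x hx y hy h⟩
  have reach : ∀ x ∈ M, Relation.ReflTransGen r x u := by
    intro x hx
    by_cases hxu : R x u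
    · have hxv : ¬ R x v := fun hxv => huv (hR.trans (hR.symm hxu) hxv)
      exact (edge x hx v hv hxv).trans (edge v hv u hu fun h => huv (hR.symm h))
    · exact edge x hx u hu hxu
  have : Std.Symm r := ⟨fun a b ⟨ha, hb, h⟩ => ⟨hb, ha, h.symm⟩⟩
  exact fun x hx y hy => (reach x hx).trans (Std.Symm.symm _ _ (reach y hy))

theorem ConnectedOn.rel (h : ConnectedOn E M) (hR : Equivalence R)
    (hE : ∀ x ∈ M, ∀ y ∈ M, E x y → R x y) {x y : V} (hx : x ∈ M) (hy : y ∈ M) : R x y := by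
  have hpath := h x hx y hy
  clear hy
  induction hpath with
  | refl => exact hR.refl x
  | tail _ hbc ih =>
    obtain ⟨hb, hc, hbc | hcb⟩ := hbc
    · exact hR.trans ih (hE _ hb _ hc hbc)
    · exact hR.trans ih (hR.symm (hE _ hc _ hb hcb))

end Connectivity

section Clusters

variable {M N : Set V} {i : Υ}

theorem IsModule.of_isGraphModule_ggraph (hrev : Reversible φ) (hunp : Unp φ)
    (hM : IsModule φ M) (hN : IsGraphModule (Ggraph φ i) N) (hNM : ¬ N ⊆ M) {a b : V}
    (ha : a ∈ M) (haN : a ∈ N) (hb : b ∈ M) (hbN : b ∉ N) (hlab : φ a b = i ∨ φ b a = i) :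
    IsModule φ N := by
  wlog hab : φ a b = i generalizing φ
  · exact (this hrev.flip hunp.flip hM.flip hN.ggraph_flip hlab.symm
      (hlab.resolve_left hab)).flip
  rw [isGraphModule_ggraph_iff] at hN
  have hout : ∀ c ∈ N, c ∉ M → ∀ m ∈ M, φ c m = i := fun c hc hcM m hm =>
    (hM m hm b hb c hcM).2.trans ((hN a haN c hc b hbN).1.1 hab)
  obtain ⟨c, hc, hcM⟩ := Set.not_subset.1 hNM
  suffices h : ∀ x ∈ N, ∀ z ∉ N, φ x z = φ a z ∧ φ z x = φ z a from
    fun x hx y hy z hz => ⟨(h x hx z hz).1.trans (h y hy z hz).1.symm,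
      (h x hx z hz).2.trans (h y hy z hz).2.symm⟩
  intro x hx z hz
  have hxz : x ≠ z := fun h => hz (h ▸ hx)
  have haz : a ≠ z := fun h => hz (h ▸ haN)
  by_cases hzM : z ∈ M
  · have hNz : ∀ w ∈ N, φ w z = i := fun w hw =>
      (hN c hc w hw z hz).1.1 (hout c hc hcM z hzM)
    have h := (hNz x hx).trans (hNz a haN).symm
    exact ⟨h, hrev x z a z hxz haz h⟩
  by_cases hxM : x ∈ M
  · exact hM x hxM a ha z hzM
  · exact hunp.twins_of_ggraph_twins hrev (fun h => hxM (h ▸ ha)) haz hxz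
      (Or.inr (hout x hx hxM a ha)) (hN x hx a haN z hz)

theorem IsStrongModule.not_overlap_ggraph [Finite V] (hrev : Reversible φ) (hunp : Unp φ)
    (hM : IsStrongModule φ M)
    (hlab : ∀ x ∈ M, ∀ y ∈ M, ¬ SameChild φ M x y → φ x y = i ∨ φ y x = i)
    (hN : IsGraphModuleNe (Ggraph φ i) N) : ¬ Overlap M N := by
  intro hov
  have ⟨⟨a, haM, haN⟩, hMN, hNM⟩ := hov
  obtain ⟨b, hbM, hbN⟩ := Set.not_subset.1 hMN
  obtain ⟨x, hx, y, hy, hxN, hyN, hxy⟩ :=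
    exists_not_sameChild_of_split (φ := φ) (· ∈ N) haM haN hbM hbN
  exact hM.2 N ⟨hN.1, hM.1.2.of_isGraphModule_ggraph hrev hunp hN.2 hNM hx hxN hy hyN
    (hlab x hx y hy hxy)⟩ hov

theorem isOneCluster_ggraph [Finite V] (hrev : Reversible φ) (hunp : Unp φ)
    (hM : IsStrongModule φ M) (h2 : 2 ≤ M.ncard)
    (hlab : ∀ x ∈ M, ∀ y ∈ M, ¬ SameChild φ M x y → φ x y = i ∨ φ y x = i) :
    IsOneCluster (Ggraph φ i) M := by
  have hR := sameChild_equivalence (φ := φ) h2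
  obtain ⟨u, hu, v, hv, huv⟩ := exists_not_sameChild (φ := φ) h2
  refine ⟨⟨⟨hM.1.1, hM.1.2.isGraphModule_ggraph i⟩,
    fun N hN => hM.not_overlap_ggraph hrev hunp hlab hN⟩, h2,
    connectedOn_of_not_rel hR (fun x hx y hy hxy => ?_) hu hv huv⟩
  have hne : x ≠ y := fun h => hxy (h ▸ hR.refl x)
  exact (hlab x hx y hy hxy).imp (⟨hne, ·⟩) (⟨hne.symm, ·⟩)

theorem not_isOneCluster_ggraph [Finite V] (h2 : 2 ≤ M.ncard) {k : Υ}
    (hlab : ∀ x ∈ M, ∀ y ∈ M, ¬ SameChild φ M x y → φ x y ≠ k) :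
    ¬ IsOneCluster (Ggraph φ k) M := by
  intro hk
  obtain ⟨x, hx, y, hy, hxy⟩ := exists_not_sameChild (φ := φ) h2
  exact hxy (hk.2.2.rel (sameChild_equivalence h2)
    (fun p hp q hq hpq => by_contra fun h => hlab p hp q hq h hpq.2) hx hy)

end Clusters

end TwoStructure

theorem oneCluster_in_at_most_two_cotrees_general {V Υ : Type*} [Fintype V]
    (φ : V → V → Υ) (hrev : Reversible φ) (hunp : Unp φ)
    (M : Set V) (hM : IsStrongModule φ M) (h2 : 2 ≤ M.ncard) (i j : Υ)
    (hlabel : ∀ x ∈ M, ∀ y ∈ M, x ≠ y → IsLcaModule φ x y M →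
      (φ x y = i ∧ φ y x = j) ∨ (φ x y = j ∧ φ y x = i)) :
    IsOneCluster (Ggraph φ i) M ∧ IsOneCluster (Ggraph φ j) M ∧
      ∀ k : Υ, k ≠ i → k ≠ j → ¬ IsOneCluster (Ggraph φ k) M := by
  have hsep : ∀ x ∈ M, ∀ y ∈ M, ¬ SameChild φ M x y →
      (φ x y = i ∧ φ y x = j) ∨ (φ x y = j ∧ φ y x = i) := fun x hx y hy h =>
    hlabel x hx y hy (fun hxy => h (hxy ▸ (sameChild_equivalence h2).refl x))
      ((isLcaModule_iff_not_sameChild hM hx hy).2 h)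
  refine ⟨isOneCluster_ggraph hrev hunp hM h2 fun x hx y hy h =>
      (hsep x hx y hy h).imp And.left And.right,
    isOneCluster_ggraph hrev hunp hM h2 fun x hx y hy h =>
      (hsep x hx y hy h).symm.imp And.left And.right,
    fun k hki hkj => not_isOneCluster_ggraph h2 fun x hx y hy h hk => ?_⟩
  rcases hsep x hx y hy h with ⟨hi, -⟩ | ⟨hj, -⟩
  · exact hki (hk.symm.trans hi)
  · exact hkj (hk.symm.trans hj)

/-- In a reversible uniformly non-prime 2-structure, a strong module `M`
labeled by the pair `(i, j)` in the tree representation is a 1-cluster of the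
cotrees `T_i` and `T_j`, and of no other cotree `T_k`. -/
theorem oneCluster_in_at_most_two_cotrees {V Υ : Type*} [Fintype V]
    (φ : V → V → Υ) (hrev : Reversible φ) (hunp : Unp φ)
    (M : Set V) (hM : IsStrongModule φ M) (h2 : 2 ≤ M.ncard) (i j : Υ)
    (hlabel : ∀ x ∈ M, ∀ y ∈ M, x ≠ y → IsLcaModule φ x y M →
      (φ x y = i ∧ φ y x = j) ∨ (φ x y = j ∧ φ y x = i))
    (hattained : ∃ x ∈ M, ∃ y ∈ M, x ≠ y ∧ IsLcaModule φ x y M ∧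
      φ x y = i ∧ φ y x = j) :
    IsOneCluster (Ggraph φ i) M ∧ IsOneCluster (Ggraph φ j) M ∧
      ∀ k : Υ, k ≠ i → k ≠ j → ¬ IsOneCluster (Ggraph φ k) M :=
  oneCluster_in_at_most_two_cotrees_general φ hrev hunp M hM h2 i j hlabel
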